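/- arXiv:1408.1821 — 5 statements merged into one kernel-verified Lean document; each statement's English description precedes it below -/
import Mathlib

section
/- Let G be a simple group generated by a set X ⊆ G. Suppose there exists a word l over X^{±1} with l.prod = 1 but l.reverse.prod ≠ 1. Then every element of G is a palindrome with respect to X; that is, the palindromic width pw(G, X) equals 1. -/
/-- An element `g` of a group `G` is a palindrome with respect to `X ⊆ G` if `g` is the
product of some word over `X^{±1}` that equals its own reverse. -/
def IsPalindrome {G : Type*} [Group G] (X : Set G) (g : G) : Prop :=
  ∃ l : List G, (∀ t ∈ l, t ∈ X ∪ X⁻¹) ∧ l.reverse = l ∧ l.prod = g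

private lemma letter_inv {G : Type*} [Group G] {X : Set G} {t : G}
    (ht : t ∈ X ∪ X⁻¹) : t⁻¹ ∈ X ∪ X⁻¹ := by
  rcases ht with h | h
  · exact Or.inr (by simpa using h)
  · exact Or.inl (by simpa using h)

/-- If `G` is simple, generated by `X`, and there is a word `l` over
`X^{±1}` with `l.prod = 1` but `l.reverse.prod ≠ 1`, then every element of `G` is a
palindrome with respect to `X`; i.e. `pw(G, X) = 1`. -/
theorem simple_group_palindromic_width_one {G : Type*} [Group G] [IsSimpleGroup G]
    (X : Set G) (hX : Subgroup.closure X = ⊤)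
    (l : List G) (hl : ∀ t ∈ l, t ∈ X ∪ X⁻¹) (hrel : l.prod = 1)
    (hrev : l.reverse.prod ≠ 1) :
    ∀ g : G, IsPalindrome X g := by
  -- N: elements that arise as reverse-products of relations
  set C : Set G := {g | ∃ u : List G, (∀ t ∈ u, t ∈ X ∪ X⁻¹) ∧ u.prod = 1 ∧
      u.reverse.prod = g} with hC
  have hone : (1 : G) ∈ C := ⟨[], by simp, by simp, by simp⟩
  have hmul : ∀ a b : G, a ∈ C → b ∈ C → a * b ∈ C := by
    rintro a b ⟨u, hu, hu1, hur⟩ ⟨v, hv, hv1, hvr⟩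
    refine ⟨v ++ u, ?_, by simp [hu1, hv1], ?_⟩
    · intro t ht
      rcases List.mem_append.mp ht with h | h
      exacts [hv t h, hu t h]
    · simp [List.reverse_append, hur, hvr]
  have hinv : ∀ a : G, a ∈ C → a⁻¹ ∈ C := by
    rintro a ⟨u, hu, hu1, hur⟩
    refine ⟨(u.map (fun x => x⁻¹)).reverse, ?_, ?_, ?_⟩
    · intro t ht
      simp only [List.mem_reverse, List.mem_map] at ht
      obtain ⟨s, hs, rfl⟩ := ht
      exact letter_inv (hu s hs)
    · rw [← List.prod_inv_reverse, hu1, inv_one]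
    · rw [List.reverse_reverse]
      have : u.reverse.prod⁻¹ = (u.reverse.map (fun x => x⁻¹)).reverse.prod :=
        List.prod_inv_reverse _
      rw [hur] at this
      simpa [List.map_reverse] using this.symm
  -- conjugation by a single letter
  have hconj_letter : ∀ t ∈ X ∪ X⁻¹, ∀ g ∈ C, t * g * t⁻¹ ∈ C := by
    rintro t ht g ⟨u, hu, hu1, hur⟩
    refine ⟨t⁻¹ :: (u ++ [t]), ?_, by simp [hu1], ?_⟩
    · intro s hs
      rcases List.mem_cons.mp hs with rfl | hs'
      · exact letter_inv ht
      · rcases List.mem_append.mp hs' with h | h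
        · exact hu s h
        · rw [List.mem_singleton.mp h]; exact ht
    · simp [List.reverse_append, hur, mul_assoc]
  have hconj : ∀ a : G, ∀ g ∈ C, a * g * a⁻¹ ∈ C := by
    intro a
    have ha : a ∈ Subgroup.closure X := hX ▸ Subgroup.mem_top a
    refine Subgroup.closure_induction
      (p := fun x _ => (∀ g ∈ C, x * g * x⁻¹ ∈ C) ∧ (∀ g ∈ C, x⁻¹ * g * x ∈ C))
      ?_ ?_ ?_ ?_ ha |>.1
    · intro x hx
      constructor
      · exact hconj_letter x (Or.inl hx)
      · intro g hg
        simpa using hconj_letter x⁻¹ (letter_inv (Or.inl hx)) g hg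
    · constructor <;> intro g hg <;> simpa using hg
    · rintro x y _ _ ⟨hx1, hx2⟩ ⟨hy1, hy2⟩
      constructor
      · intro g hg
        have := hx1 _ (hy1 g hg)
        simpa [mul_assoc] using this
      · intro g hg
        have := hy2 _ (hx2 g hg)
        simpa [mul_assoc] using this
    · rintro x _ ⟨hx1, hx2⟩
      exact ⟨fun g hg => by simpa using hx2 g hg, fun g hg => by simpa using hx1 g hg⟩
  -- N as a normal subgroup
  let N : Subgroup G :=
    { carrier := C
      one_mem' := hone
      mul_mem' := fun {a b} ha hb => hmul a b ha hb
      inv_mem' := fun {a} ha => hinv a ha }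
  have hN : N.Normal := ⟨fun n hn a => hconj a n hn⟩
  have hNne : N ≠ ⊥ := by
    intro h
    have : l.reverse.prod ∈ N := ⟨l, hl, hrel, rfl⟩
    rw [h, Subgroup.mem_bot] at this
    exact hrev this
  have hNtop : N = ⊤ := (hN.eq_bot_or_eq_top.resolve_left hNne)
  intro g
  have hg : g ∈ N := hNtop ▸ Subgroup.mem_top g
  obtain ⟨u, hu, hu1, hur⟩ := hg
  refine ⟨u.reverse ++ u, ?_, ?_, ?_⟩
  · intro t ht
    rcases List.mem_append.mp ht with h | h
    · exact hu t (List.mem_reverse.mp h)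
    · exact hu t h
  · simp [List.reverse_append]
  · simp [hur, hu1]
end

section
/- Let G be a non-abelian simple group generated by a set X ⊆ G, and suppose there exist x, y ∈ X with x*y ≠ y*x and a word w over X^{±1} such that the word x :: y :: w has product 1. Then every element of G is a palindrome with respect to the generating set X ∪ {x*y}; in particular pw(G, X ∪ {x*y}) = 1, and this generating set is obtained from X by adding at most one element. -/
open Function
open scoped commutatorElement

namespace Subgroup

variable {G H : Type*} [Group G] [Group H]

lemma eq_top_of_goursatFst_ne_bot_of_goursatSnd_ne_bot [IsSimpleGroup G] [IsSimpleGroup H]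
    {I : Subgroup (G × H)} (hI₁ : Surjective (Prod.fst ∘ I.subtype))
    (hI₂ : Surjective (Prod.snd ∘ I.subtype)) (h₁ : I.goursatFst ≠ ⊥) (h₂ : I.goursatSnd ≠ ⊥) :
    I = ⊤ := by
  have hFst := ((normal_goursatFst hI₁).eq_bot_or_eq_top).resolve_left h₁
  have hSnd := ((normal_goursatSnd hI₂).eq_bot_or_eq_top).resolve_left h₂
  simpa [hFst, hSnd] using I.goursatFst_prod_goursatSnd_le

lemma surjective_comp_subtype_iff_map_eq_top {f : G →* H} {I : Subgroup G} :
    Surjective (f ∘ I.subtype) ↔ I.map f = ⊤ := by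
  rw [← MonoidHom.coe_comp, ← MonoidHom.range_eq_top, MonoidHom.range_comp, range_subtype]

end Subgroup

section antidiagClosure

variable {G : Type*} [Group G]

def antidiagClosure (S : Set G) : Subgroup (G × G) :=
  Subgroup.closure ((fun s => (s, s⁻¹)) '' S)

lemma mk_inv_mem_antidiagClosure {S : Set G} {s : G} (hs : s ∈ S) :
    (s, s⁻¹) ∈ antidiagClosure S :=
  Subgroup.subset_closure ⟨s, hs, rfl⟩

lemma exists_word_of_mem_antidiagClosure {S : Set G} {p : G × G} (hp : p ∈ antidiagClosure S) :
    ∃ l : List G, (∀ t ∈ l, t ∈ S ∪ S⁻¹) ∧ l.prod = p.1 ∧ l.reverse.prod = p.2⁻¹ := by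
  induction hp using Subgroup.closure_induction with
  | mem p hp =>
    obtain ⟨s, hs, rfl⟩ := hp
    exact ⟨[s], by simp [hs], by simp, by simp⟩
  | one => exact ⟨[], by simp, by simp, by simp⟩
  | mul p q _ _ hp hq =>
    obtain ⟨l, hl, hl₁, hl₂⟩ := hp
    obtain ⟨m, hm, hm₁, hm₂⟩ := hq
    refine ⟨l ++ m, ?_, ?_, ?_⟩
    · simpa using fun t ht => ht.elim (hl t) (hm t)
    · simp [hl₁, hm₁]
    · simp [hl₂, hm₂]
  | inv p _ hp =>
    obtain ⟨l, hl, hl₁, hl₂⟩ := hp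
    refine ⟨(l.map (·⁻¹)).reverse, ?_, ?_, ?_⟩
    · simpa [or_comm] using fun t ht => hl t⁻¹ ht
    · simp [← List.prod_inv_reverse, hl₁]
    · simpa [List.prod_reverse_noncomm] using hl₂

lemma isPalindrome_of_mk_one_mem_antidiagClosure {S : Set G} {g : G}
    (hg : (g, 1) ∈ antidiagClosure S) : IsPalindrome S g := by
  obtain ⟨l, hl, hl₁, hl₂⟩ := exists_word_of_mem_antidiagClosure hg
  refine ⟨l ++ l.reverse, ?_, by simp, ?_⟩
  · simpa using hl
  · simp_all

lemma map_fst_antidiagClosure (S : Set G) :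
    (antidiagClosure S).map (MonoidHom.fst G G) = Subgroup.closure S := by
  simp [antidiagClosure, MonoidHom.map_closure, Set.image_image]

lemma map_snd_antidiagClosure (S : Set G) :
    (antidiagClosure S).map (MonoidHom.snd G G) = Subgroup.closure S := by
  simp [antidiagClosure, MonoidHom.map_closure, Set.image_image, Set.image_inv_eq_inv]

lemma mk_commutator_one_mem_antidiagClosure {S : Set G} {x y : G} (hx : x ∈ S) (hy : y ∈ S)
    (hxy : x * y ∈ S) : (⁅x⁻¹, y⁻¹⁆, 1) ∈ antidiagClosure S := by
  have := mul_mem (mul_mem (inv_mem (mk_inv_mem_antidiagClosure hx))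
    (inv_mem (mk_inv_mem_antidiagClosure hy))) (mk_inv_mem_antidiagClosure hxy)
  simpa [commutatorElement_def, mul_assoc] using this

lemma mk_one_commutator_mem_antidiagClosure {S : Set G} {x y : G} (hx : x ∈ S) (hy : y ∈ S)
    (hxy : x * y ∈ S) : (1, ⁅x⁻¹, y⁻¹⁆) ∈ antidiagClosure S := by
  have := mul_mem (mul_mem (mk_inv_mem_antidiagClosure hx) (mk_inv_mem_antidiagClosure hy))
    (inv_mem (mk_inv_mem_antidiagClosure hxy))
  simpa [commutatorElement_def, mul_assoc] using this

lemma antidiagClosure_eq_top [IsSimpleGroup G] {S : Set G} (hS : Subgroup.closure S = ⊤)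
    {x y : G} (hx : x ∈ S) (hy : y ∈ S) (hxyS : x * y ∈ S) (hxy : x * y ≠ y * x) :
    antidiagClosure S = ⊤ := by
  have hc : ⁅x⁻¹, y⁻¹⁆ ≠ 1 := by
    rwa [Ne, commutatorElement_eq_one_iff_mul_comm, ← mul_inv_rev, ← mul_inv_rev, inv_inj, eq_comm]
  apply Subgroup.eq_top_of_goursatFst_ne_bot_of_goursatSnd_ne_bot
  · exact (Subgroup.surjective_comp_subtype_iff_map_eq_top (f := MonoidHom.fst G G)).2
      (by rw [map_fst_antidiagClosure, hS])
  · exact (Subgroup.surjective_comp_subtype_iff_map_eq_top (f := MonoidHom.snd G G)).2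
      (by rw [map_snd_antidiagClosure, hS])
  · intro h
    exact hc (Subgroup.mem_bot.1
      (h ▸ Subgroup.mem_goursatFst.2 (mk_commutator_one_mem_antidiagClosure hx hy hxyS)))
  · intro h
    exact hc (Subgroup.mem_bot.1
      (h ▸ Subgroup.mem_goursatSnd.2 (mk_one_commutator_mem_antidiagClosure hx hy hxyS)))

end antidiagClosure

theorem simple_group_palindromic_width_one_after_adding_generator_general {G : Type*} [Group G]
    [IsSimpleGroup G]
    (X : Set G) (hX : Subgroup.closure X = ⊤)
    (x y : G) (hx : x ∈ X) (hy : y ∈ X) (hxy : x * y ≠ y * x) :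
    ∀ g : G, IsPalindrome (X ∪ {x * y}) g := by
  have hgen : Subgroup.closure (X ∪ {x * y}) = ⊤ :=
    top_le_iff.1 (hX ▸ Subgroup.closure_mono Set.subset_union_left)
  have hD := antidiagClosure_eq_top hgen (Or.inl hx) (Or.inl hy) (Or.inr rfl) hxy
  exact fun g => isPalindrome_of_mk_one_mem_antidiagClosure (hD ▸ Subgroup.mem_top (g, 1))

/-- Let `G` be a non-abelian simple group generated by `X`, with
non-commuting `x, y ∈ X` and a word `w` over `X^{±1}` such that `x :: y :: w` has
product `1`. Then every element of `G` is a palindrome with respect to `X ∪ {x*y}`,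
i.e. `pw(G, X ∪ {x*y}) = 1`. -/
theorem simple_group_palindromic_width_one_after_adding_generator {G : Type*} [Group G]
    [IsSimpleGroup G] (hna : ∃ a b : G, a * b ≠ b * a)
    (X : Set G) (hX : Subgroup.closure X = ⊤)
    (x y : G) (hx : x ∈ X) (hy : y ∈ X) (hxy : x * y ≠ y * x)
    (w : List G) (hw : ∀ t ∈ w, t ∈ X ∪ X⁻¹)
    (hrel : (x :: y :: w).prod = 1) :
    ∀ g : G, IsPalindrome (X ∪ {x * y}) g :=
  simple_group_palindromic_width_one_after_adding_generator_general X hX x y hx hy hxy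
end

section
/- Let G be a just-infinite group generated by a set X ⊆ G, and suppose there exists a word l over X^{±1} with l.prod = 1 but l.reverse.prod ≠ 1. Then G has finite palindromic width with respect to X: there exists k ∈ ℕ such that every element of G is a product of at most k palindromes with respect to X. -/
namespace PalindromicWidth

variable {G : Type*} [Group G] {X : Set G}

def IsWord (X : Set G) (w : List G) : Prop := ∀ t ∈ w, t ∈ X ∪ X⁻¹

theorem IsWord.append {w v : List G} (hw : IsWord X w) (hv : IsWord X v) :
    IsWord X (w ++ v) := by
  intro t ht
  rcases List.mem_append.1 ht with h | h
  exacts [hw t h, hv t h]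

theorem IsWord.reverse {w : List G} (hw : IsWord X w) : IsWord X w.reverse :=
  fun t ht => hw t (List.mem_reverse.1 ht)

theorem IsWord.map_inv {w : List G} (hw : IsWord X w) : IsWord X (w.map (·⁻¹)) := by
  intro t ht
  obtain ⟨s, hs, rfl⟩ := List.mem_map.1 ht
  have : s⁻¹ ∈ (X ∪ X⁻¹)⁻¹ := Set.inv_mem_inv.2 (hw s hs)
  rwa [Set.union_inv, inv_inv, Set.union_comm] at this

theorem exists_isWord_prod_eq (hX : Subgroup.closure X = ⊤) (g : G) :
    ∃ w, IsWord X w ∧ w.prod = g := by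
  have hg : g ∈ Submonoid.closure (X ∪ X⁻¹) := by
    rw [← Subgroup.closure_toSubmonoid, hX]
    trivial
  exact Submonoid.exists_list_of_mem_closure hg

theorem prod_map_inv_reverse (w : List G) : (w.map (·⁻¹)).reverse.prod = w.prod⁻¹ :=
  (List.prod_inv_reverse w).symm

theorem prod_map_inv (w : List G) : (w.map (·⁻¹)).prod = w.reverse.prod⁻¹ := by
  rw [List.prod_reverse_noncomm, inv_inv]

def reversedRelators (X : Set G) : Subgroup G where
  carrier := {g | ∃ w, IsWord X w ∧ w.prod = 1 ∧ w.reverse.prod = g}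
  one_mem' := ⟨[], fun _ h => absurd h List.not_mem_nil, rfl, rfl⟩
  mul_mem' := by
    rintro - - ⟨w, hw, hw1, rfl⟩ ⟨v, hv, hv1, rfl⟩
    exact ⟨v ++ w, hv.append hw, by simp [hv1, hw1], by simp⟩
  inv_mem' := by
    rintro - ⟨w, hw, hw1, rfl⟩
    refine ⟨(w.map (·⁻¹)).reverse, hw.map_inv.reverse, ?_, ?_⟩
    · rw [prod_map_inv_reverse, hw1, inv_one]
    · rw [List.reverse_reverse, prod_map_inv]

theorem mem_reversedRelators {g : G} :
    g ∈ reversedRelators X ↔ ∃ w, IsWord X w ∧ w.prod = 1 ∧ w.reverse.prod = g :=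
  Iff.rfl

theorem reversedRelators_normal (hX : Subgroup.closure X = ⊤) :
    (reversedRelators X).Normal := by
  refine ⟨fun _ hn g => ?_⟩
  obtain ⟨w, hw, hw1, rfl⟩ := mem_reversedRelators.1 hn
  obtain ⟨u, hu, rfl⟩ := exists_isWord_prod_eq hX g
  refine ⟨u.map (·⁻¹) ++ w ++ u.reverse, (hu.map_inv.append hw).append hu.reverse, ?_, ?_⟩
  · simp only [List.prod_append, prod_map_inv, hw1, mul_one, inv_mul_cancel]
  · simp only [List.reverse_append, List.reverse_reverse, List.prod_append,
      prod_map_inv_reverse, mul_assoc]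

theorem isPalindrome_of_mem_reversedRelators {g : G} (hg : g ∈ reversedRelators X) :
    IsPalindrome X g := by
  obtain ⟨w, hw, hw1, rfl⟩ := mem_reversedRelators.1 hg
  exact ⟨w ++ w.reverse, hw.append hw.reverse, by simp, by simp [hw1]⟩

theorem isPalindrome_of_mem {t : G} (ht : t ∈ X ∪ X⁻¹) : IsPalindrome X t :=
  ⟨[t], by simpa using ht, rfl, List.prod_singleton⟩

theorem exists_bounded_palindrome_prod_of_finiteIndex (hX : Subgroup.closure X = ⊤)
    (H : Subgroup G) [H.FiniteIndex] (hH : ∀ h ∈ H, IsPalindrome X h) :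
    ∃ k : ℕ, ∀ g : G, ∃ ps : List G, ps.length ≤ k ∧
      (∀ p ∈ ps, IsPalindrome X p) ∧ ps.prod = g := by
  choose word hword hword_prod using exists_isWord_prod_eq hX
  obtain ⟨M, hM⟩ := (Set.finite_range fun q : G ⧸ H => (word q.out).length).bddAbove
  refine ⟨M + 1, fun g => ?_⟩
  set g₀ := (g : G ⧸ H).out
  have hcoset : g₀⁻¹ * g ∈ H := QuotientGroup.eq.1 (QuotientGroup.out_eq' (g : G ⧸ H))
  refine ⟨word g₀ ++ [g₀⁻¹ * g], ?_, ?_, ?_⟩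
  · simpa using hM ⟨(g : G ⧸ H), rfl⟩
  · intro p hp
    rcases List.mem_append.1 hp with h | h
    · exact isPalindrome_of_mem (hword g₀ p h)
    · exact List.mem_singleton.1 h ▸ hH _ hcoset
  · simp [hword_prod]

end PalindromicWidth

open PalindromicWidth in
theorem just_infinite_finite_palindromic_width_general {G : Type*} [Group G]
    (hji : ∀ N : Subgroup G, N.Normal → N ≠ ⊥ → N.FiniteIndex)
    (X : Set G) (hX : Subgroup.closure X = ⊤)
    (l : List G) (hl : ∀ t ∈ l, t ∈ X ∪ X⁻¹) (hrel : l.prod = 1)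
    (hrev : l.reverse.prod ≠ 1) :
    ∃ k : ℕ, ∀ g : G, ∃ ps : List G, ps.length ≤ k ∧
      (∀ p ∈ ps, IsPalindrome X p) ∧ ps.prod = g := by
  have hR_ne_bot : reversedRelators X ≠ ⊥ := fun hbot =>
    hrev (Subgroup.mem_bot.1 (hbot ▸ mem_reversedRelators.2 ⟨l, hl, hrel, rfl⟩))
  have := hji _ (reversedRelators_normal hX) hR_ne_bot
  exact exists_bounded_palindrome_prod_of_finiteIndex hX _
    fun _ => isPalindrome_of_mem_reversedRelators

/-- Let `G` be a just-infinite group generated by `X`, and suppose there is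
a word `l` over `X^{±1}` with `l.prod = 1` but `l.reverse.prod ≠ 1`. Then `G` has finite
palindromic width with respect to `X`. -/
theorem just_infinite_finite_palindromic_width {G : Type*} [Group G]
    (hinf : Infinite G)
    (hji : ∀ N : Subgroup G, N.Normal → N ≠ ⊥ → N.FiniteIndex)
    (X : Set G) (hX : Subgroup.closure X = ⊤)
    (l : List G) (hl : ∀ t ∈ l, t ∈ X ∪ X⁻¹) (hrel : l.prod = 1)
    (hrev : l.reverse.prod ≠ 1) :
    ∃ k : ℕ, ∀ g : G, ∃ ps : List G, ps.length ≤ k ∧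
      (∀ p ∈ ps, IsPalindrome X p) ∧ ps.prod = g :=
  just_infinite_finite_palindromic_width_general hji X hX l hl hrel hrev
end

section
/- Let G be a just-infinite group generated by a set X ⊆ G, and suppose there exist x, y ∈ X with x*y ≠ y*x and a word w over X^{±1} such that the word x :: y :: w has product 1. Then G has finite palindromic width with respect to the generating set X ∪ {x*y}: there exists k ∈ ℕ such that every element of G is a product of at most k palindromes with respect to X ∪ {x*y}. -/
/-!
Reading a relator `u` (a word over `Y^{±1}` with product `1`) backwards gives the element
`prod (reverse u)`, and these elements form a normal subgroup `K` of `G = ⟨Y⟩`. Each of them is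
a single palindrome, namely `prod (u ++ reverse u)`. The relator `(xy)⁻¹ · x · y` over
`X ∪ {xy}` reads backwards as `yx(xy)⁻¹ ≠ 1`, so `K` is nontrivial, hence of finite index by
just-infiniteness. Writing each of the finitely many coset representatives as a product of
letters, which are palindromes, bounds the palindromic width by their maximal length plus one.
-/

section ReversedRelators

variable {G : Type*} [Group G] {Y : Set G}

lemma inv_mem_union_inv {t : G} (ht : t ∈ Y ∪ Y⁻¹) : t⁻¹ ∈ Y ∪ Y⁻¹ := by
  simpa [or_comm] using ht

variable (Y) in
def reversedRelators : Subgroup G where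
  carrier := {g | ∃ u : List G, (∀ t ∈ u, t ∈ Y ∪ Y⁻¹) ∧ u.prod = 1 ∧ u.reverse.prod = g}
  one_mem' := ⟨[], by simp, by simp, by simp⟩
  mul_mem' := by
    rintro a b ⟨u, hu, hu1, rfl⟩ ⟨v, hv, hv1, rfl⟩
    refine ⟨v ++ u, ?_, by simp [hu1, hv1], by simp⟩
    simpa [or_imp, forall_and] using And.intro hv hu
  inv_mem' := by
    rintro a ⟨u, hu, hu1, rfl⟩
    refine ⟨(u.map (·⁻¹)).reverse, ?_, by rw [← List.prod_inv_reverse, hu1, inv_one], ?_⟩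
    · intro t ht
      obtain ⟨s, hs, rfl⟩ := List.mem_map.1 (List.mem_reverse.1 ht)
      exact inv_mem_union_inv (hu s hs)
    · rw [List.prod_inv_reverse, List.map_reverse, List.reverse_reverse]

lemma conj_mem_reversedRelators {t a : G} (ht : t ∈ Y ∪ Y⁻¹) (ha : a ∈ reversedRelators Y) :
    t * a * t⁻¹ ∈ reversedRelators Y := by
  obtain ⟨u, hu, hu1, rfl⟩ := ha
  refine ⟨[t⁻¹] ++ u ++ [t], ?_, by simp [hu1], by simp [mul_assoc]⟩
  simp only [List.mem_append, List.mem_singleton]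
  rintro s ((rfl | hs) | rfl)
  exacts [inv_mem_union_inv ht, hu s hs, ht]

lemma reversedRelators_normal (hY : Subgroup.closure Y = ⊤) : (reversedRelators Y).Normal := by
  rw [← Subgroup.normalizer_eq_top_iff, eq_top_iff, ← hY, Subgroup.closure_le]
  intro t ht a
  have ht' : t ∈ Y ∪ Y⁻¹ := Or.inl ht
  refine ⟨conj_mem_reversedRelators ht', fun h => ?_⟩
  simpa [mul_assoc] using conj_mem_reversedRelators (inv_mem_union_inv ht') h

lemma isPalindrome_of_mem_reversedRelators {g : G} (hg : g ∈ reversedRelators Y) :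
    IsPalindrome Y g := by
  obtain ⟨u, hu, hu1, rfl⟩ := hg
  refine ⟨u ++ u.reverse, ?_, by simp, by simp [hu1]⟩
  simpa [or_imp, forall_and] using hu

lemma mul_mul_inv_mem_reversedRelators {a b : G} (ha : a ∈ Y) (hb : b ∈ Y) (hab : a * b ∈ Y) :
    b * a * (a * b)⁻¹ ∈ reversedRelators Y := by
  refine ⟨[(a * b)⁻¹, a, b], ?_, by simp [mul_assoc], by simp [mul_assoc]⟩
  simp [ha, hb, hab]

lemma reversedRelators_ne_bot {a b : G} (ha : a ∈ Y) (hb : b ∈ Y) (hab : a * b ∈ Y)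
    (hcomm : a * b ≠ b * a) : reversedRelators Y ≠ ⊥ := by
  intro hbot
  have h := mul_mul_inv_mem_reversedRelators ha hb hab
  rw [hbot, Subgroup.mem_bot, mul_inv_eq_one] at h
  exact hcomm h.symm

end ReversedRelators

section BoundedWidth

variable {G : Type*} [Group G]

lemma isPalindrome_of_mem_union_inv {Y : Set G} {t : G} (ht : t ∈ Y ∪ Y⁻¹) :
    IsPalindrome Y t :=
  ⟨[t], by simpa using ht, rfl, by simp⟩

lemma exists_list_prod_eq_of_closure_eq_top {Y P : Set G} (hY : Subgroup.closure Y = ⊤)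
    (hP : Y ∪ Y⁻¹ ⊆ P) (g : G) : ∃ l : List G, (∀ p ∈ l, p ∈ P) ∧ l.prod = g := by
  have hg : g ∈ Submonoid.closure (Y ∪ Y⁻¹) := by
    rw [← Subgroup.closure_toSubmonoid, hY]
    trivial
  obtain ⟨l, hl, rfl⟩ := Submonoid.exists_list_of_mem_closure hg
  exact ⟨l, fun p hp => hP (hl p hp), rfl⟩

lemma exists_bounded_length_prod_of_finiteIndex {P : Set G}
    (hP : ∀ g : G, ∃ l : List G, (∀ p ∈ l, p ∈ P) ∧ l.prod = g)
    (K : Subgroup G) [K.FiniteIndex] (hK : (K : Set G) ⊆ P) :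
    ∃ k : ℕ, ∀ g : G, ∃ l : List G, l.length ≤ k ∧ (∀ p ∈ l, p ∈ P) ∧ l.prod = g := by
  have : Finite (G ⧸ K) := Subgroup.finite_quotient_of_finiteIndex
  choose rep hrepP hrep using fun q : G ⧸ K => hP q.out
  obtain ⟨B, hB⟩ := Finite.bddAbove_range fun q => (rep q).length
  refine ⟨B + 1, fun g => ⟨rep g ++ [(g : G ⧸ K).out⁻¹ * g], ?_, ?_, ?_⟩⟩
  · simpa using hB ⟨(g : G ⧸ K), rfl⟩
  · have hmem : (g : G ⧸ K).out⁻¹ * g ∈ K := QuotientGroup.leftRel_apply.mp (Quotient.mk_out g)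
    simpa [or_imp, forall_and] using ⟨hrepP g, hK hmem⟩
  · simp [hrep]

end BoundedWidth

theorem just_infinite_finite_palindromic_width_after_adding_generator_general {G : Type*} [Group G]
    (hji : ∀ N : Subgroup G, N.Normal → N ≠ ⊥ → N.FiniteIndex)
    (X : Set G) (hX : Subgroup.closure X = ⊤)
    (x y : G) (hx : x ∈ X) (hy : y ∈ X) (hxy : x * y ≠ y * x) :
    ∃ k : ℕ, ∀ g : G, ∃ ps : List G, ps.length ≤ k ∧
      (∀ p ∈ ps, IsPalindrome (X ∪ {x * y}) p) ∧ ps.prod = g := by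
  set Y := X ∪ {x * y}
  have hY : Subgroup.closure Y = ⊤ := top_unique (hX ▸ Subgroup.closure_mono Set.subset_union_left)
  have := hji _ (reversedRelators_normal hY)
    (reversedRelators_ne_bot (Or.inl hx) (Or.inl hy) (Or.inr rfl) hxy)
  exact exists_bounded_length_prod_of_finiteIndex
    (exists_list_prod_eq_of_closure_eq_top hY fun _ => isPalindrome_of_mem_union_inv)
    (reversedRelators Y) fun _ => isPalindrome_of_mem_reversedRelators

/-- Let `G` be a just-infinite group generated by `X`, with non-commuting
`x, y ∈ X` and a word `w` over `X^{±1}` such that `x :: y :: w` has product `1`. Then `G`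
has finite palindromic width with respect to `X ∪ {x*y}`. -/
theorem just_infinite_finite_palindromic_width_after_adding_generator {G : Type*} [Group G]
    (hinf : Infinite G)
    (hji : ∀ N : Subgroup G, N.Normal → N ≠ ⊥ → N.FiniteIndex)
    (X : Set G) (hX : Subgroup.closure X = ⊤)
    (x y : G) (hx : x ∈ X) (hy : y ∈ X) (hxy : x * y ≠ y * x)
    (w : List G) (hw : ∀ t ∈ w, t ∈ X ∪ X⁻¹)
    (hrel : (x :: y :: w).prod = 1) :
    ∃ k : ℕ, ∀ g : G, ∃ ps : List G, ps.length ≤ k ∧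
      (∀ p ∈ ps, IsPalindrome (X ∪ {x * y}) p) ∧ ps.prod = g :=
  just_infinite_finite_palindromic_width_after_adding_generator_general hji X hX x y hx hy hxy
end

section
/- Let n ≥ 5, let σ := (1 2)(3 4) be the even permutation of {1,…,n} that swaps 1 with 2 and 3 with 4 and fixes all other points, and let X_n ⊆ A_n be the conjugacy class of σ in the alternating group A_n. If g ∈ A_n is a product of k palindromes with respect to X_n, then g fixes at least n − 4k points of {1,…,n}. -/
/-- Product of a palindromic word whose letters are all conjugate to an involution `s`
is either `1` or conjugate to `s`. -/
lemma pal_prod_aux {G : Type*} [Group G] (s : G) (hs : s * s = 1)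
    {l : List G} (hp : l.Palindrome) (hmem : ∀ t ∈ l, IsConj s t) :
    l.prod = 1 ∨ IsConj s l.prod := by
  induction hp with
  | nil => exact Or.inl rfl
  | singleton x => exact Or.inr (by simpa using hmem x (by simp))
  | @cons_concat x l hpl ih =>
    have hx : IsConj s x := hmem x (by simp)
    have hl : ∀ t ∈ l, IsConj s t := fun t ht => hmem t (by simp [ht])
    obtain ⟨c, hc⟩ := isConj_iff.mp hx
    have hxx : x * x = 1 := by
      rw [← hc]
      calc c * s * c⁻¹ * (c * s * c⁻¹) = c * (s * s) * c⁻¹ := by group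
        _ = 1 := by rw [hs]; group
    have hxi : x⁻¹ = x := inv_eq_of_mul_eq_one_right hxx
    have hprod : (x :: (l ++ [x])).prod = x * l.prod * x⁻¹ := by
      rw [hxi]; simp [List.prod_append, mul_assoc]
    rcases ih hl with h1 | h2
    · left; rw [hprod, h1]; group
    · right
      rw [hprod]
      exact h2.trans (isConj_iff.mpr ⟨x, rfl⟩)

/-- Let `n ≥ 5`, `σ = (1 2)(3 4) ∈ A_n`, and let `X_n` be the conjugacy
class of `σ` in `A_n`. If `g ∈ A_n` is a product of `k` palindromes with respect to
`X_n`, then `g` fixes at least `n - 4k` points. -/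
theorem product_of_palindromes_in_alternating_group_fixes_points
    (n : ℕ) (hn : 5 ≤ n)
    (σ : Equiv.Perm (Fin n))
    (hσ : σ = Equiv.swap ⟨0, by omega⟩ ⟨1, by omega⟩ * Equiv.swap ⟨2, by omega⟩ ⟨3, by omega⟩)
    (hmem : σ ∈ alternatingGroup (Fin n))
    (X : Set (alternatingGroup (Fin n)))
    (hX : X = {τ : alternatingGroup (Fin n) | IsConj (⟨σ, hmem⟩ : alternatingGroup (Fin n)) τ})
    (g : alternatingGroup (Fin n)) (k : ℕ) (ps : List (alternatingGroup (Fin n)))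
    (hlen : ps.length = k) (hps : ∀ p ∈ ps, IsPalindrome X p) (hprod : ps.prod = g) :
    n - 4 * k ≤ (Finset.univ.filter fun i : Fin n => (g : Equiv.Perm (Fin n)) i = i).card := by
  classical
  set a : Fin n := ⟨0, by omega⟩
  set b : Fin n := ⟨1, by omega⟩
  set c : Fin n := ⟨2, by omega⟩
  set d : Fin n := ⟨3, by omega⟩
  have hab : a ≠ b := by simp [a, b, Fin.ext_iff]
  have hcd : c ≠ d := by simp [c, d, Fin.ext_iff]
  have hdisj : (Equiv.swap a b).Disjoint (Equiv.swap c d) := by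
    rw [Equiv.Perm.disjoint_iff_disjoint_support, Equiv.Perm.support_swap hab,
      Equiv.Perm.support_swap hcd]
    rw [Finset.disjoint_left]
    intro x hx hx'
    simp [a, b, c, d, Fin.ext_iff] at hx hx'
    omega
  -- σ is an involution
  have hσ2 : σ * σ = 1 := by
    rw [hσ, mul_assoc, ← mul_assoc (Equiv.swap c d), ← hdisj.commute.eq,
      mul_assoc, Equiv.swap_mul_self, mul_one, Equiv.swap_mul_self]
  -- σ has support of size 4
  have hσcard : σ.support.card = 4 := by
    rw [hσ, hdisj.card_support_mul, Equiv.Perm.card_support_swap hab,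
      Equiv.Perm.card_support_swap hcd]
  set s : alternatingGroup (Fin n) := ⟨σ, hmem⟩ with hs
  have hs2 : s * s = 1 := Subtype.ext (by simpa using hσ2)
  -- every letter is conjugate to s
  have hletters : ∀ t : alternatingGroup (Fin n), t ∈ X ∪ X⁻¹ → IsConj s t := by
    intro t ht
    rcases ht with ht | ht
    · rw [hX] at ht; exact ht
    · have ht' : IsConj s t⁻¹ := by rw [hX] at ht; exact ht
      obtain ⟨u, hu⟩ := isConj_iff.mp ht'
      refine isConj_iff.mpr ⟨u, ?_⟩
      have : t = (u * s * u⁻¹)⁻¹ := by rw [hu, inv_inv]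
      rw [this]
      have hsinv : s⁻¹ = s := inv_eq_of_mul_eq_one_right hs2
      simp [mul_assoc, hsinv]
  -- each palindrome has support card ≤ 4
  have hpal : ∀ p : alternatingGroup (Fin n), IsPalindrome X p →
      ((p : Equiv.Perm (Fin n)).support.card ≤ 4) := by
    intro p ⟨l, hl1, hl2, hl3⟩
    have hp := pal_prod_aux s hs2 (List.Palindrome.of_reverse_eq hl2)
      (fun t ht => hletters t (hl1 t ht))
    rw [hl3] at hp
    rcases hp with h1 | h2
    · rw [h1]; simp
    · have h3 : IsConj (s : Equiv.Perm (Fin n)) (p : Equiv.Perm (Fin n)) := by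
        obtain ⟨u, hu⟩ := isConj_iff.mp h2
        refine isConj_iff.mpr ⟨(u : Equiv.Perm (Fin n)), ?_⟩
        rw [← hu]
        push_cast
        rfl
      obtain ⟨u, hu⟩ := isConj_iff.mp h3
      rw [← hu, Equiv.Perm.card_support_conj]
      simp [hs, hσcard]
  -- product bound
  have hbound : ∀ l : List (alternatingGroup (Fin n)), (∀ p ∈ l, IsPalindrome X p) →
      ((l.prod : Equiv.Perm (Fin n)).support.card ≤ 4 * l.length) := by
    intro l
    induction l with
    | nil => intro _; simp
    | cons p t ih =>
      intro h
      have h1 : ((p * t.prod : alternatingGroup (Fin n)) : Equiv.Perm (Fin n)).support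
          ⊆ (p : Equiv.Perm (Fin n)).support ∪ (t.prod : Equiv.Perm (Fin n)).support := by
        rw [Subgroup.coe_mul]
        exact Equiv.Perm.support_mul_le _ _
      calc ((p :: t).prod : Equiv.Perm (Fin n)).support.card
          ≤ ((p : Equiv.Perm (Fin n)).support ∪ (t.prod : Equiv.Perm (Fin n)).support).card := by
            rw [List.prod_cons]; exact Finset.card_le_card h1
        _ ≤ (p : Equiv.Perm (Fin n)).support.card + (t.prod : Equiv.Perm (Fin n)).support.card :=
            Finset.card_union_le _ _
        _ ≤ 4 + 4 * t.length := by
            gcongr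
            · exact hpal p (h p (by simp))
            · exact ih (fun q hq => h q (by simp [hq]))
        _ = 4 * (p :: t).length := by simp [List.length_cons]; ring
  have hg : ((g : Equiv.Perm (Fin n)).support.card ≤ 4 * k) := by
    rw [← hprod, ← hlen]; exact hbound ps hps
  have hfix : (Finset.univ.filter fun i : Fin n => (g : Equiv.Perm (Fin n)) i = i)
      = ((g : Equiv.Perm (Fin n)).support)ᶜ := by
    ext i
    simp [Equiv.Perm.mem_support]
  rw [hfix, Finset.card_compl, Fintype.card_fin]
  exact Nat.sub_le_sub_left hg n
end
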